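/- Let σ₀, q₀, ω₀, σ₁, ω₁ and D be smooth real-valued functions on the open half-plane ℝ²₊. Define η₀ = ρ² e^{σ₀} and ω̄₁ = ω₁/η₀². Suppose that on ℝ²₊ the evolution relation ³Δω₁ = e^{2(σ₀+q₀)} D + (4/ρ) ∂_ρ ω₁ + 2 ∂ω₁·∂σ₀ + 2 ∂ω₀·∂σ₁ holds. Then at every point of ℝ²₊: η₀² ⁷Δω̄₁ = e^{2(σ₀+q₀)} D - 2 η₀² ω̄₁ ³Δσ₀ - 2 η₀² ∂σ₀·∂ω̄₁ + 2 ∂ω₀·∂σ₁. -/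

import Mathlib

open MeasureTheory Real

noncomputable section

/-- The open half-plane `{(ρ, z) : ρ > 0}`. -/
def halfPlane : Set (ℝ × ℝ) := {p | 0 < p.1}

/-- Partial derivative with respect to the first variable `ρ`. -/
noncomputable def pdρ (f : ℝ × ℝ → ℝ) (p : ℝ × ℝ) : ℝ := fderiv ℝ f p (1, 0)

/-- Partial derivative with respect to the second variable `z`. -/
noncomputable def pdz (f : ℝ × ℝ → ℝ) (p : ℝ × ℝ) : ℝ := fderiv ℝ f p (0, 1)

/-- `|∂f|² = (∂_ρ f)² + (∂_z f)²`. -/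
noncomputable def gradSq (f : ℝ × ℝ → ℝ) (p : ℝ × ℝ) : ℝ := (pdρ f p) ^ 2 + (pdz f p) ^ 2

/-- `∂f·∂g = ∂_ρ f ∂_ρ g + ∂_z f ∂_z g`. -/
noncomputable def gradDot (f g : ℝ × ℝ → ℝ) (p : ℝ × ℝ) : ℝ :=
  pdρ f p * pdρ g p + pdz f p * pdz g p

/-- Flat 2-dimensional Laplacian `Δf = ∂²_ρ f + ∂²_z f`. -/
noncomputable def lap2 (f : ℝ × ℝ → ℝ) (p : ℝ × ℝ) : ℝ := pdρ (pdρ f) p + pdz (pdz f) p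

/-- `³Δf = Δf + ∂_ρ f / ρ`. -/
noncomputable def lap3 (f : ℝ × ℝ → ℝ) (p : ℝ × ℝ) : ℝ := lap2 f p + pdρ f p / p.1

/-- `⁷Δf = Δf + 5 ∂_ρ f / ρ`. -/
noncomputable def lap7 (f : ℝ × ℝ → ℝ) (p : ℝ × ℝ) : ℝ := lap2 f p + 5 * pdρ f p / p.1

/-- `η₀ = ρ² e^{σ₀}`. -/
noncomputable def eta (σ₀ : ℝ × ℝ → ℝ) : ℝ × ℝ → ℝ := fun p => p.1 ^ 2 * Real.exp (σ₀ p)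

/-- `ω̄₁ = ω₁ / η₀²`. -/
noncomputable def omegaBar (η₀ ω₁ : ℝ × ℝ → ℝ) : ℝ × ℝ → ℝ := fun p => ω₁ p / (η₀ p) ^ 2

private lemma OB.diffAt {S : Set (ℝ×ℝ)} {f : ℝ×ℝ→ℝ} (hS : IsOpen S) (hf : ContDiffOn ℝ (⊤ : ℕ∞) f S)
    {p} (hp : p ∈ S) : DifferentiableAt ℝ f p :=
  (hf.contDiffAt (hS.mem_nhds hp)).differentiableAt (by simp)

private lemma OB.pd_smoothOn {S : Set (ℝ×ℝ)} (hS : IsOpen S) {f : ℝ×ℝ→ℝ}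
    (hf : ContDiffOn ℝ (⊤ : ℕ∞) f S) (v : ℝ×ℝ) :
    ContDiffOn ℝ (⊤ : ℕ∞) (fun q => fderiv ℝ f q v) S :=
  (hf.fderiv_of_isOpen hS (by simp)).clm_apply contDiffOn_const

private lemma OB.pd_congr {S : Set (ℝ×ℝ)} (hS : IsOpen S) {f g : ℝ×ℝ→ℝ} (h : ∀ q ∈ S, f q = g q)
    {p} (hp : p ∈ S) : fderiv ℝ f p = fderiv ℝ g p :=
  Filter.EventuallyEq.fderiv_eq (Filter.eventuallyEq_of_mem (hS.mem_nhds hp) h)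

private lemma OB.pd_mul {f g : ℝ×ℝ→ℝ} {p} (hf : DifferentiableAt ℝ f p)
    (hg : DifferentiableAt ℝ g p) (v : ℝ×ℝ) :
    fderiv ℝ (fun x => f x * g x) p v = fderiv ℝ f p v * g p + f p * fderiv ℝ g p v := by
  rw [fderiv_fun_mul hf hg]; simp [smul_eq_mul]; ring

private lemma OB.pd_add {f g : ℝ×ℝ→ℝ} {p} (hf : DifferentiableAt ℝ f p)
    (hg : DifferentiableAt ℝ g p) (v : ℝ×ℝ) :
    fderiv ℝ (fun x => f x + g x) p v = fderiv ℝ f p v + fderiv ℝ g p v := by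
  rw [fderiv_fun_add hf hg]; simp

private lemma OB.pd_exp {f : ℝ×ℝ→ℝ} {p} (hf : DifferentiableAt ℝ f p) (v : ℝ×ℝ) :
    fderiv ℝ (fun x => Real.exp (f x)) p v = Real.exp (f p) * fderiv ℝ f p v := by
  rw [hf.hasFDerivAt.exp.fderiv]; simp

private lemma OB.pd_const_mul {f : ℝ×ℝ→ℝ} {p} (hf : DifferentiableAt ℝ f p) (c : ℝ) (v : ℝ×ℝ) :
    fderiv ℝ (fun x => c * f x) p v = c * fderiv ℝ f p v := by
  rw [fderiv_const_mul hf c]; simp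

private lemma OB.dfst {p : ℝ×ℝ} : DifferentiableAt ℝ (fun x : ℝ×ℝ => x.1) p :=
  differentiable_fst.differentiableAt

private lemma OB.pd_fst (p v : ℝ×ℝ) : fderiv ℝ (fun x : ℝ×ℝ => x.1) p v = v.1 := by
  rw [(hasFDerivAt_fst (𝕜 := ℝ)).fderiv]; rfl

private lemma OB.pd_pow3 (p v : ℝ×ℝ) :
    fderiv ℝ (fun x : ℝ×ℝ => x.1 ^ 3) p v = 3 * p.1^2 * v.1 := by
  have h : (fun x : ℝ×ℝ => x.1 ^ 3) = fun x => x.1 * (x.1 * x.1) := by funext x; ring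
  rw [h, OB.pd_mul OB.dfst (OB.dfst.fun_mul OB.dfst), OB.pd_mul OB.dfst OB.dfst, OB.pd_fst]; ring

private lemma OB.pd_pow4 (p v : ℝ×ℝ) :
    fderiv ℝ (fun x : ℝ×ℝ => x.1 ^ 4) p v = 4 * p.1^3 * v.1 := by
  have h : (fun x : ℝ×ℝ => x.1 ^ 4) = fun x => x.1 * (x.1 * (x.1 * x.1)) := by funext x; ring
  rw [h, OB.pd_mul OB.dfst (OB.dfst.fun_mul (OB.dfst.fun_mul OB.dfst)),
    OB.pd_mul OB.dfst (OB.dfst.fun_mul OB.dfst), OB.pd_mul OB.dfst OB.dfst, OB.pd_fst]; ring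
theorem omegaBar_evolution_identity
    (σ₀ q₀ ω₀ σ₁ ω₁ D : ℝ × ℝ → ℝ)
    (hσ₀ : ContDiffOn ℝ (⊤ : ℕ∞) σ₀ halfPlane) (hq₀ : ContDiffOn ℝ (⊤ : ℕ∞) q₀ halfPlane)
    (hω₀ : ContDiffOn ℝ (⊤ : ℕ∞) ω₀ halfPlane) (hσ₁ : ContDiffOn ℝ (⊤ : ℕ∞) σ₁ halfPlane)
    (hω₁ : ContDiffOn ℝ (⊤ : ℕ∞) ω₁ halfPlane) (hD : ContDiffOn ℝ (⊤ : ℕ∞) D halfPlane)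
    (hev : ∀ p ∈ halfPlane,
      lap3 ω₁ p = Real.exp (2 * (σ₀ p + q₀ p)) * D p + (4 / p.1) * pdρ ω₁ p
        + 2 * gradDot ω₁ σ₀ p + 2 * gradDot ω₀ σ₁ p) :
    ∀ p ∈ halfPlane,
      (eta σ₀ p) ^ 2 * lap7 (omegaBar (eta σ₀) ω₁) p =
        Real.exp (2 * (σ₀ p + q₀ p)) * D p
          - 2 * (eta σ₀ p) ^ 2 * omegaBar (eta σ₀) ω₁ p * lap3 σ₀ p
          - 2 * (eta σ₀ p) ^ 2 * gradDot σ₀ (omegaBar (eta σ₀) ω₁) p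
          + 2 * gradDot ω₀ σ₁ p := by
  intro p hp
  have hS : IsOpen halfPlane := isOpen_lt continuous_const continuous_fst
  have hρ : (0:ℝ) < p.1 := hp
  set A : ℝ×ℝ→ℝ := fun q => Real.exp (2 * σ₀ q) with hA_def
  set E : ℝ×ℝ→ℝ := fun q => q.1 ^ 4 * A q with hE_def
  set w : ℝ×ℝ→ℝ := omegaBar (eta σ₀) ω₁ with hw_def
  have hEnz : ∀ q ∈ halfPlane, E q ≠ 0 := fun q hq =>
    ne_of_gt (mul_pos (pow_pos hq 4) (Real.exp_pos _))
  have hetaSq : ∀ q, (eta σ₀ q)^2 = E q := by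
    intro q
    show (q.1 ^ 2 * Real.exp (σ₀ q)) ^ 2 = q.1 ^ 4 * Real.exp (2 * σ₀ q)
    rw [mul_pow, two_mul, Real.exp_add]; ring
  have hwq : ∀ q, w q = ω₁ q / E q := by
    intro q
    show ω₁ q / (eta σ₀ q) ^ 2 = ω₁ q / E q
    rw [hetaSq q]
  have hUeq : ∀ q ∈ halfPlane, ω₁ q = E q * w q := by
    intro q hq; rw [hwq q, mul_comm, div_mul_cancel₀ _ (hEnz q hq)]
  -- smoothness
  have hA' : ContDiffOn ℝ (⊤ : ℕ∞) A halfPlane := (contDiffOn_const.mul hσ₀).exp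
  have hE' : ContDiffOn ℝ (⊤ : ℕ∞) E halfPlane := ((contDiff_fst.pow 4).contDiffOn).mul hA'
  have hw' : ContDiffOn ℝ (⊤ : ℕ∞) w halfPlane := (hω₁.div hE' hEnz).congr (fun q hq => hwq q)
  -- differentiability at points
  have dσ : ∀ {q}, q ∈ halfPlane → DifferentiableAt ℝ σ₀ q := fun hq => OB.diffAt hS hσ₀ hq
  have dA : ∀ {q}, q ∈ halfPlane → DifferentiableAt ℝ A q := fun hq => OB.diffAt hS hA' hq
  have dE : ∀ {q}, q ∈ halfPlane → DifferentiableAt ℝ E q := fun hq => OB.diffAt hS hE' hq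
  have dw : ∀ {q}, q ∈ halfPlane → DifferentiableAt ℝ w q := fun hq => OB.diffAt hS hw' hq
  -- first-order formulas
  have hA1 : ∀ (v : ℝ×ℝ), ∀ q ∈ halfPlane,
      fderiv ℝ A q v = A q * (2 * fderiv ℝ σ₀ q v) := by
    intro v q hq
    rw [hA_def]
    rw [OB.pd_exp ((dσ hq).const_mul 2) v, OB.pd_const_mul (dσ hq) 2 v]
  have hE1 : ∀ (v : ℝ×ℝ), ∀ q ∈ halfPlane,
      fderiv ℝ E q v = (4 * v.1) * (q.1^3 * A q) + q.1^4 * (A q * (2 * fderiv ℝ σ₀ q v)) := by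
    intro v q hq
    rw [hE_def]
    rw [OB.pd_mul (OB.dfst.fun_pow 4) (dA hq) v, OB.pd_pow4, hA1 v q hq]; ring
  have hU1 : ∀ (v : ℝ×ℝ), ∀ q ∈ halfPlane,
      fderiv ℝ ω₁ q v = fderiv ℝ E q v * w q + E q * fderiv ℝ w q v := by
    intro v q hq
    rw [OB.pd_congr hS hUeq hq, OB.pd_mul (dE hq) (dw hq) v]
  -- second-order formulas at p
  have hU2 : ∀ (v : ℝ×ℝ), fderiv ℝ (fun q => fderiv ℝ ω₁ q v) p v
      = fderiv ℝ (fun q => fderiv ℝ E q v) p v * w p + 2 * (fderiv ℝ E p v * fderiv ℝ w p v)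
        + E p * fderiv ℝ (fun q => fderiv ℝ w q v) p v := by
    intro v
    rw [OB.pd_congr hS (hU1 v) hp]
    have d1 : DifferentiableAt ℝ (fun q => fderiv ℝ E q v) p :=
      OB.diffAt hS (OB.pd_smoothOn hS hE' v) hp
    have d2 : DifferentiableAt ℝ (fun q => fderiv ℝ w q v) p :=
      OB.diffAt hS (OB.pd_smoothOn hS hw' v) hp
    rw [OB.pd_add (d1.fun_mul (dw hp)) ((dE hp).fun_mul d2) v, OB.pd_mul d1 (dw hp) v,
      OB.pd_mul (dE hp) d2 v]
    ring
  have hE2 : ∀ (v : ℝ×ℝ), fderiv ℝ (fun q => fderiv ℝ E q v) p v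
      = A p * (12 * p.1^2 * v.1^2 + 16 * p.1^3 * v.1 * fderiv ℝ σ₀ p v
          + p.1^4 * (4 * (fderiv ℝ σ₀ p v)^2 + 2 * fderiv ℝ (fun q => fderiv ℝ σ₀ q v) p v)) := by
    intro v
    rw [OB.pd_congr hS (hE1 v) hp]
    have dσv : DifferentiableAt ℝ (fun q => fderiv ℝ σ₀ q v) p :=
      OB.diffAt hS (OB.pd_smoothOn hS hσ₀ v) hp
    have d3 : DifferentiableAt ℝ (fun q : ℝ×ℝ => q.1^3) p := OB.dfst.pow 3
    have d4 : DifferentiableAt ℝ (fun q : ℝ×ℝ => q.1^4) p := OB.dfst.pow 4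
    rw [OB.pd_add ((d3.fun_mul (dA hp)).const_mul (4*v.1))
        (d4.fun_mul ((dA hp).fun_mul (dσv.const_mul 2))) v,
      OB.pd_const_mul (d3.fun_mul (dA hp)) (4*v.1) v, OB.pd_mul d3 (dA hp) v, OB.pd_pow3,
      OB.pd_mul d4 ((dA hp).fun_mul (dσv.const_mul 2)) v, OB.pd_pow4,
      OB.pd_mul (dA hp) (dσv.const_mul 2) v, OB.pd_const_mul dσv 2 v, hA1 v p hp]
    ring
  -- assemble
  have hev' := hev p hp
  unfold lap3 lap2 gradDot pdρ pdz at hev'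
  unfold lap7 lap3 lap2 gradDot pdρ pdz
  rw [hU2 (1,0), hU2 (0,1), hE2 (1,0), hE2 (0,1)] at hev'
  rw [hU1 (1,0) p hp, hU1 (0,1) p hp, hE1 (1,0) p hp, hE1 (0,1) p hp] at hev'
  rw [hetaSq p]
  have hEp : E p = p.1^4 * A p := rfl
  rw [hEp] at hev' ⊢
  norm_num at hev' ⊢
  field_simp at hev' ⊢
  linear_combination hev'
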